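/- In a pLTS, if Δ lift(≈) Θ and Δ ⟹^α̂ Δ' (a weak lifted transition), then there exists Θ' such that Θ ⟹^α̂ Θ' and Δ' lift(≈) Θ', where ≈ is the largest weak bisimulation. -/

import Mathlib

open BigOperators

/-- Finitely supported real-valued functions; distributions live inside these. -/
abbrev PDist (S : Type) := S →₀ ℝ

/-- The point distribution assigning probability 1 to `s`. -/
noncomputable def point {S : Type} (s : S) : PDist S := Finsupp.single s 1

/-- `Δ` is a (finitely supported) probability distribution. -/
def IsDist {S : Type} (Δ : PDist S) : Prop :=
  (∀ s, 0 ≤ Δ s) ∧ (Δ.sum fun _ x => x) = 1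

/-- The lifting of a relation from states to distributions, defined as the smallest
relation containing the point rule and closed under finite convex combinations. -/
inductive Lift {S : Type} (R : S → PDist S → Prop) : PDist S → PDist S → Prop
  | pt {s : S} {Θ : PDist S} : R s Θ → Lift R (point s) Θ
  | lin (I : Finset ℕ) (p : ℕ → ℝ) (Δ Θ : ℕ → PDist S) :
      (∀ i ∈ I, 0 ≤ p i) → (∑ i ∈ I, p i) = 1 →
      (∀ i ∈ I, Lift R (Δ i) (Θ i)) →
      Lift R (∑ i ∈ I, p i • Δ i) (∑ i ∈ I, p i • Θ i)

/-- The lifting of a relation on states to a relation on distributions. -/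
def liftRel {S : Type} (R : S → S → Prop) : PDist S → PDist S → Prop :=
  Lift (fun s Θ => ∃ t, R s t ∧ Θ = point t)

/-- A probabilistic labelled transition system; `none` is the internal action τ. -/
structure PLTS (S Act : Type) where
  trans : S → Option Act → PDist S → Prop

/-- The "hatted" relation: `s →^τ̂ Δ` iff `s →^τ Δ` or `Δ = δ_s`;
for visible actions it coincides with the transition relation. -/
def hatT {S Act : Type} (L : PLTS S Act) (α : Option Act) (s : S) (Δ : PDist S) : Prop :=
  L.trans s α Δ ∨ (α = none ∧ Δ = point s)

/-- The reflexive-transitive closure of the lifted τ̂-relation on distributions. -/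
def weakTau {S Act : Type} (L : PLTS S Act) : PDist S → PDist S → Prop :=
  Relation.ReflTransGen (Lift (hatT L none))

/-- The lifted strong transition relation on distributions for a fixed label. -/
def strongL {S Act : Type} (L : PLTS S Act) (α : Option Act) : PDist S → PDist S → Prop :=
  Lift (fun s Δ => L.trans s α Δ)

/-- Weak transitions: `⟹^τ̂` for τ, and `⟹^τ̂ · →^a · ⟹^τ̂` for visible actions. -/
def weak {S Act : Type} (L : PLTS S Act) : Option Act → PDist S → PDist S → Prop
  | none => weakTau L
  | some a => fun Δ Θ =>
      ∃ Δ₁ Δ₂, weakTau L Δ Δ₁ ∧ strongL L (some a) Δ₁ Δ₂ ∧ weakTau L Δ₂ Θ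

/-- `R` is a weak bisimulation: strong transitions on either side are matched by
weak transitions of the other, modulo the lifting of `R`. -/
def IsWeakBisim {S Act : Type} (L : PLTS S Act) (R : S → S → Prop) : Prop :=
  ∀ s t, R s t →
    (∀ α Δ, L.trans s α Δ → ∃ Θ, weak L α (point t) Θ ∧ liftRel R Δ Θ) ∧
    (∀ α Δ, L.trans t α Δ → ∃ Θ, weak L α (point s) Θ ∧ liftRel R Θ Δ)

/-- Weak bisimilarity: the largest weak bisimulation (union of all of them). -/
def Bisim {S Act : Type} (L : PLTS S Act) (s t : S) : Prop :=
  ∃ R, IsWeakBisim L R ∧ R s t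

/-!
A pair `Δ lift(R₀) Θ` is witnessed by a distribution `μ` on pairs `(s, Θₛ)` with `R₀ s Θₛ`,
whose two marginals are `Δ` and `Θ`. A witness `μ` of `Δ lift(≈) Θ` and a witness `ν` of a
lifted step `Δ → Δ'` share the marginal `Δ`, so they glue along it with weights
`μ (s, δ t) * ν (s, Ξ) / Δ s`. For each glued triple, `s ≈ t` and `s → Ξ`, so the bisimulation
matches the step by a weak transition of `t`; these weak transitions recombine with the glued
weights since weak transitions are closed under convex combinations (τ̂-chains of different
lengths are padded by self-loops, which every distribution has). Iterating this one-step
transfer handles `⟹^τ̂`; a visible weak transition is handled as τ-transfer, one step,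
τ-transfer.
-/

open Finset Finsupp

variable {S : Type}

theorem isDist_point (s : S) : IsDist (point s) := by
  classical
  refine ⟨fun t => ?_, ?_⟩
  · rw [point, single_apply]; split_ifs <;> norm_num
  · simp [point]

theorem IsDist.sum {ι : Type*} {T : Finset ι} {p : ι → ℝ} {Δ : ι → PDist S}
    (hp : ∀ i ∈ T, 0 ≤ p i) (hp1 : ∑ i ∈ T, p i = 1) (hΔ : ∀ i ∈ T, IsDist (Δ i)) :
    IsDist (∑ i ∈ T, p i • Δ i) := by
  refine ⟨fun s => ?_, ?_⟩
  · rw [finsetSum_apply]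
    exact sum_nonneg fun i hi => mul_nonneg (hp i hi) ((hΔ i hi).1 s)
  · rw [← sum_finsetSum_index (fun _ => rfl) (fun _ _ _ => rfl), ← hp1]
    refine sum_congr rfl fun i hi => ?_
    rw [sum_smul_index (fun _ => rfl), ← Finsupp.mul_sum, (hΔ i hi).2, mul_one]

namespace Lift

variable {R₀ : S → PDist S → Prop}

theorem sum {ι : Type*} (T : Finset ι) (p : ι → ℝ) (Δ Θ : ι → PDist S)
    (hp : ∀ i ∈ T, 0 ≤ p i) (hp1 : ∑ i ∈ T, p i = 1) (h : ∀ i ∈ T, Lift R₀ (Δ i) (Θ i)) :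
    Lift R₀ (∑ i ∈ T, p i • Δ i) (∑ i ∈ T, p i • Θ i) := by
  -- `Lift.lin` only takes `ℕ`-indexed families: move `T` into `ℕ` and extend by zero.
  let e : T ↪ ℕ := T.equivFin.toEmbedding.trans Fin.valEmbedding
  have reindex : ∀ (F : ι → PDist S),
      ∑ i ∈ T, p i • F i = ∑ k ∈ T.attach.map e,
        Function.extend e (fun i => p i) 0 k • Function.extend e (fun i => F i) 0 k := by
    intro F
    rw [sum_map, ← sum_attach]
    simp only [e.injective.extend_apply]
  rw [reindex Δ, reindex Θ]
  refine Lift.lin _ _ _ _ ?_ ?_ ?_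
  all_goals simp only [mem_map, mem_attach, true_and, forall_exists_index, forall_apply_eq_imp_iff,
    sum_map, e.injective.extend_apply]
  · exact fun i => hp i i.2
  · rw [sum_attach T (fun i => p i), hp1]
  · exact fun i => h i i.2

theorem mono {R₁ : S → PDist S → Prop} (hR : ∀ s Θ, R₀ s Θ → R₁ s Θ) {Δ Θ : PDist S}
    (h : Lift R₀ Δ Θ) : Lift R₁ Δ Θ := by
  induction h with
  | pt hr => exact Lift.pt (hR _ _ hr)
  | lin I p Δ Θ hp hp1 _ ih => exact Lift.lin I p Δ Θ hp hp1 ih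

theorem isDist_left {Δ Θ : PDist S} (h : Lift R₀ Δ Θ) : IsDist Δ := by
  induction h with
  | pt _ => exact isDist_point _
  | lin I p Δ Θ hp hp1 _ ih => exact IsDist.sum hp hp1 ih

theorem isDist_right (hR : ∀ s Θ, R₀ s Θ → IsDist Θ) {Δ Θ : PDist S} (h : Lift R₀ Δ Θ) :
    IsDist Θ := by
  induction h with
  | pt hr => exact hR _ _ hr
  | lin I p Δ Θ hp hp1 _ ih => exact IsDist.sum hp hp1 ih

theorem refl_of_isDist (hR : ∀ s, R₀ s (point s)) {Δ : PDist S} (hΔ : IsDist Δ) :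
    Lift R₀ Δ Δ := by
  have hΔsum : ∑ s ∈ Δ.support, Δ s • point s = Δ := by
    simp only [point, smul_single_one]; exact Δ.sum_single
  rw [← hΔsum]
  exact Lift.sum _ _ _ _ (fun s _ => hΔ.1 s) hΔ.2 fun s _ => Lift.pt (hR s)

theorem exists_witness {Δ Θ : PDist S} (h : Lift R₀ Δ Θ) :
    ∃ μ : PDist (S × PDist S), IsDist μ ∧ (∀ x ∈ μ.support, R₀ x.1 x.2) ∧
      Δ = linearCombination ℝ (fun x => point x.1) μ ∧ Θ = linearCombination ℝ Prod.snd μ := by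
  induction h with
  | @pt s Θ hr =>
    refine ⟨point (s, Θ), isDist_point _, fun x hx => ?_, ?_, ?_⟩
    · rw [point, support_single _ one_ne_zero, mem_singleton] at hx
      exact hx ▸ hr
    all_goals simp [point]
  | lin I p Δ Θ hp hp1 _ ih =>
    classical
    choose! μ hμ using ih
    refine ⟨∑ i ∈ I, p i • μ i, IsDist.sum hp hp1 fun i hi => (hμ i hi).1, fun x hx => ?_, ?_, ?_⟩
    · obtain ⟨i, hi, hx⟩ := mem_biUnion.mp (support_finsetSum hx)
      exact (hμ i hi).2.1 x (support_smul hx)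
    all_goals
      simp only [map_sum, map_smul]
      exact sum_congr rfl fun i hi => by simp only [(hμ i hi).2.2.1, (hμ i hi).2.2.2]

end Lift

section Gluing

variable {α β M : Type*} [AddCommGroup M] [Module ℝ M]

theorem linearCombination_point_apply [DecidableEq S] (μ : α →₀ ℝ) (f : α → S) (s : S) :
    linearCombination ℝ (fun a => point (f a)) μ s = ∑ a ∈ μ.support with f a = s, μ a := by
  rw [linearCombination_apply, Finsupp.sum, finsetSum_apply, sum_filter]
  refine sum_congr rfl fun a _ => ?_
  simp [point, single_apply]

theorem sum_glue_left [DecidableEq S] {μ : α →₀ ℝ} {ν : β →₀ ℝ} {f : α → S} {g : β → S}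
    {Δ : PDist S} (hμ : ∀ a, 0 ≤ μ a) (hμΔ : linearCombination ℝ (fun a => point (f a)) μ = Δ)
    (hνΔ : linearCombination ℝ (fun b => point (g b)) ν = Δ) (F : α → M) :
    ∑ z ∈ μ.support ×ˢ ν.support with f z.1 = g z.2, (μ z.1 * ν z.2 / Δ (f z.1)) • F z.1 =
      linearCombination ℝ F μ := by
  rw [sum_filter, sum_product, linearCombination_apply, Finsupp.sum]
  refine sum_congr rfl fun a ha => ?_
  have hΔ : Δ (f a) ≠ 0 := by
    rw [← hμΔ, linearCombination_point_apply]
    refine (lt_of_lt_of_le ((hμ a).lt_of_ne' (mem_support_iff.mp ha)) ?_).ne'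
    exact single_le_sum (fun a _ => hμ a) (mem_filter.mpr ⟨ha, rfl⟩)
  calc ∑ b ∈ ν.support, (if f a = g b then (μ a * ν b / Δ (f a)) • F a else 0)
      = (μ a / Δ (f a) * ∑ b ∈ ν.support with g b = f a, ν b) • F a := by
        rw [Finset.mul_sum, sum_smul, sum_filter]
        refine sum_congr rfl fun b _ => ?_
        simp only [eq_comm (a := g b)]
        split_ifs <;> simp [mul_div_right_comm]
    _ = μ a • F a := by rw [← linearCombination_point_apply, hνΔ, div_mul_cancel₀ _ hΔ]

theorem sum_glue_right [DecidableEq S] {μ : α →₀ ℝ} {ν : β →₀ ℝ} {f : α → S} {g : β → S}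
    {Δ : PDist S} (hν : ∀ b, 0 ≤ ν b) (hμΔ : linearCombination ℝ (fun a => point (f a)) μ = Δ)
    (hνΔ : linearCombination ℝ (fun b => point (g b)) ν = Δ) (G : β → M) :
    ∑ z ∈ μ.support ×ˢ ν.support with f z.1 = g z.2, (μ z.1 * ν z.2 / Δ (f z.1)) • G z.2 =
      linearCombination ℝ G ν := by
  rw [← sum_glue_left hν hνΔ hμΔ G]
  refine sum_equiv (Equiv.prodComm α β) (fun z => ?_) fun z hz => ?_
  · simp only [mem_filter, mem_product, Equiv.prodComm_apply, Prod.fst_swap, Prod.snd_swap]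
    tauto
  · rw [(mem_filter.mp hz).2, mul_comm]; rfl

end Gluing

section Weak

variable {Act : Type} (L : PLTS S Act)

def tauSteps : ℕ → PDist S → PDist S → Prop
  | 0 => Eq
  | n + 1 => Relation.Comp (tauSteps n) (Lift (hatT L none))

variable {L}

theorem weakTau_iff_exists_tauSteps {Δ Θ : PDist S} : weakTau L Δ Θ ↔ ∃ n, tauSteps L n Δ Θ := by
  constructor
  · intro h
    induction h with
    | refl => exact ⟨0, rfl⟩
    | tail _ hstep ih =>
      obtain ⟨n, hn⟩ := ih
      exact ⟨n + 1, _, hn, hstep⟩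
  · rintro ⟨n, hn⟩
    induction n generalizing Θ with
    | zero => exact hn ▸ Relation.ReflTransGen.refl
    | succ n ih =>
      obtain ⟨X, hX, hstep⟩ := hn
      exact (ih hX).tail hstep

theorem lift_hatT_refl {Θ : PDist S} (hΘ : IsDist Θ) : Lift (hatT L none) Θ Θ :=
  Lift.refl_of_isDist (fun _ => Or.inr ⟨rfl, rfl⟩) hΘ

theorem tauSteps.mono {Δ Θ : PDist S} (hΘ : IsDist Θ) {n m : ℕ} (hnm : n ≤ m)
    (h : tauSteps L n Δ Θ) : tauSteps L m Δ Θ := by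
  induction m, hnm using Nat.le_induction with
  | base => exact h
  | succ m _ ih => exact ⟨Θ, ih, lift_hatT_refl hΘ⟩

theorem tauSteps.sum {ι : Type*} (n : ℕ) (T : Finset ι) (p : ι → ℝ) (Δ Θ : ι → PDist S)
    (hp : ∀ i ∈ T, 0 ≤ p i) (hp1 : ∑ i ∈ T, p i = 1) (h : ∀ i ∈ T, tauSteps L n (Δ i) (Θ i)) :
    tauSteps L n (∑ i ∈ T, p i • Δ i) (∑ i ∈ T, p i • Θ i) := by
  induction n generalizing Θ with
  | zero => exact sum_congr rfl fun i hi => by rw [show Δ i = Θ i from h i hi]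
  | succ n ih =>
    classical
    choose! X hX using h
    exact ⟨∑ i ∈ T, p i • X i, ih X fun i hi => (hX i hi).1,
      Lift.sum T p X Θ hp hp1 fun i hi => (hX i hi).2⟩

theorem weakTau_sum {ι : Type*} (T : Finset ι) (p : ι → ℝ) (Δ Θ : ι → PDist S)
    (hp : ∀ i ∈ T, 0 ≤ p i) (hp1 : ∑ i ∈ T, p i = 1) (h : ∀ i ∈ T, weakTau L (Δ i) (Θ i))
    (hΘ : ∀ i ∈ T, IsDist (Θ i)) :
    weakTau L (∑ i ∈ T, p i • Δ i) (∑ i ∈ T, p i • Θ i) := by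
  classical
  choose! n hn using fun i hi => weakTau_iff_exists_tauSteps.mp (h i hi)
  refine weakTau_iff_exists_tauSteps.mpr ⟨∑ i ∈ T, n i, tauSteps.sum _ T p Δ Θ hp hp1 ?_⟩
  exact fun i hi => (hn i hi).mono (hΘ i hi) (single_le_sum (fun _ _ => Nat.zero_le _) hi)

theorem weak_sum {ι : Type*} (α : Option Act) (T : Finset ι) (p : ι → ℝ) (Δ Θ : ι → PDist S)
    (hp : ∀ i ∈ T, 0 ≤ p i) (hp1 : ∑ i ∈ T, p i = 1) (h : ∀ i ∈ T, weak L α (Δ i) (Θ i))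
    (hΘ : ∀ i ∈ T, IsDist (Θ i)) :
    weak L α (∑ i ∈ T, p i • Δ i) (∑ i ∈ T, p i • Θ i) := by
  cases α with
  | none => exact weakTau_sum T p Δ Θ hp hp1 h hΘ
  | some a =>
    classical
    choose! X Y hXY using h
    refine ⟨∑ i ∈ T, p i • X i, ∑ i ∈ T, p i • Y i, ?_, ?_, ?_⟩
    · exact weakTau_sum T p Δ X hp hp1 (fun i hi => (hXY i hi).1)
        fun i hi => (hXY i hi).2.1.isDist_left
    · exact Lift.sum T p X Y hp hp1 fun i hi => (hXY i hi).2.1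
    · exact weakTau_sum T p Y Θ hp hp1 (fun i hi => (hXY i hi).2.2) hΘ

end Weak

section Transfer

variable {Act : Type} {L : PLTS S Act}

theorem liftRel_isDist_right {R : S → S → Prop} {Δ Θ : PDist S} (h : liftRel R Δ Θ) :
    IsDist Θ :=
  Lift.isDist_right (fun _ _ ⟨t, _, hΘ⟩ => hΘ ▸ isDist_point t) h

theorem Bisim.exists_weak_of_hatT {α : Option Act} {s t : S} {Ξ : PDist S} (hst : Bisim L s t)
    (hstep : hatT L α s Ξ) : ∃ Θ, weak L α (point t) Θ ∧ liftRel (Bisim L) Ξ Θ := by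
  obtain ⟨R, hR, hst⟩ := hst
  rcases hstep with htrans | ⟨rfl, rfl⟩
  · obtain ⟨Θ, hweak, hlift⟩ := (hR s t hst).1 _ _ htrans
    exact ⟨Θ, hweak, hlift.mono fun _ _ ⟨u, hsu, hu⟩ => ⟨u, ⟨R, hR, hsu⟩, hu⟩⟩
  · exact ⟨point t, Relation.ReflTransGen.refl, Lift.pt ⟨t, ⟨R, hR, hst⟩, rfl⟩⟩

theorem bisim_transfer_lift_hatT {α : Option Act} {Δ Θ Δ' : PDist S}
    (h : liftRel (Bisim L) Δ Θ) (hstep : Lift (hatT L α) Δ Δ') :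
    ∃ Θ', weak L α Θ Θ' ∧ liftRel (Bisim L) Δ' Θ' := by
  classical
  obtain ⟨μ, hμ, hμR, hΔμ, hΘμ⟩ := h.exists_witness
  obtain ⟨ν, hν, hνR, hΔν, hΔ'ν⟩ := hstep.exists_witness
  set P := {z ∈ μ.support ×ˢ ν.support | z.1.1 = z.2.1}
  set w : (S × PDist S) × (S × PDist S) → ℝ := fun z => μ z.1 * ν z.2 / Δ z.1.1
  have hmatch : ∀ z ∈ P, ∃ Θ', weak L α z.1.2 Θ' ∧ liftRel (Bisim L) z.2.2 Θ' := by
    intro z hz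
    obtain ⟨hmem, hz⟩ := mem_filter.mp hz
    obtain ⟨t, hst, ht⟩ := hμR _ (mem_product.mp hmem).1
    rw [ht]
    exact hst.exists_weak_of_hatT (hz ▸ hνR _ (mem_product.mp hmem).2)
  choose! Θ' hΘ' using hmatch
  have hw : ∀ z ∈ P, 0 ≤ w z := fun z _ =>
    div_nonneg (mul_nonneg (hμ.1 _) (hν.1 _)) (hstep.isDist_left.1 _)
  have hw1 : ∑ z ∈ P, w z = 1 := by
    have h := sum_glue_left hμ.1 hΔμ.symm hΔν.symm fun _ => (1 : ℝ)
    simp only [smul_eq_mul, mul_one, linearCombination_apply] at h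
    exact h.trans hμ.2
  refine ⟨∑ z ∈ P, w z • Θ' z, ?_, ?_⟩
  · rw [hΘμ, ← sum_glue_left hμ.1 hΔμ.symm hΔν.symm Prod.snd]
    exact weak_sum α P w _ Θ' hw hw1 (fun z hz => (hΘ' z hz).1)
      fun z hz => liftRel_isDist_right (hΘ' z hz).2
  · rw [hΔ'ν, ← sum_glue_right hν.1 hΔμ.symm hΔν.symm Prod.snd]
    exact Lift.sum P w _ Θ' hw hw1 fun z hz => (hΘ' z hz).2

theorem bisim_transfer_weakTau {Δ Θ Δ' : PDist S} (h : liftRel (Bisim L) Δ Θ)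
    (hstep : weakTau L Δ Δ') : ∃ Θ', weakTau L Θ Θ' ∧ liftRel (Bisim L) Δ' Θ' := by
  induction hstep with
  | refl => exact ⟨Θ, Relation.ReflTransGen.refl, h⟩
  | tail _ hstep ih =>
    obtain ⟨Θ₁, hΘ₁, h₁⟩ := ih
    obtain ⟨Θ', hΘ', h'⟩ := bisim_transfer_lift_hatT h₁ hstep
    exact ⟨Θ', hΘ₁.trans hΘ', h'⟩

end Transfer

/-- Weak transfer property: a weak transition from `Δ` is matched by a weak transition
from any `Θ` with `Δ lift(≈) Θ`, up to `lift(≈)`. -/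
theorem bisim_weak_transfer {S Act : Type} (L : PLTS S Act) (α : Option Act)
    (Δ Θ Δ' : PDist S) (h : liftRel (Bisim L) Δ Θ) (hstep : weak L α Δ Δ') :
    ∃ Θ', weak L α Θ Θ' ∧ liftRel (Bisim L) Δ' Θ' := by
  cases α with
  | none => exact bisim_transfer_weakTau h hstep
  | some a =>
    obtain ⟨Δ₁, Δ₂, h₁, h₂, h₃⟩ := hstep
    obtain ⟨Θ₁, hΘ₁, hr₁⟩ := bisim_transfer_weakTau h h₁
    obtain ⟨Θ₂, ⟨X, Y, hX, hXY, hY⟩, hr₂⟩ :=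
      bisim_transfer_lift_hatT hr₁ (h₂.mono fun _ _ => Or.inl)
    obtain ⟨Θ', hΘ', hr'⟩ := bisim_transfer_weakTau hr₂ h₃
    exact ⟨Θ', ⟨X, Y, hΘ₁.trans hX, hXY, hY.trans hΘ'⟩, hr'⟩
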